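/- arXiv:math/9910033 — 3 statements merged into one kernel-verified Lean document; each statement's English description precedes it below -/
import Mathlib

section
/- Let K be a compact metric space, I = [T₁,T₂] a compact interval, and let 𝓡 be a family of maps γ : I → K. Suppose there is a countable family (f_n) of continuous real-valued functions on K that separates points of K, and a constant M_n for each n such that for all γ ∈ 𝓡 and s,t ∈ I, |f_n(γ(s)) − f_n(γ(t))| ≤ M_n|s−t|. Then 𝓡 is equicontinuous. -/
open Set

/-- Uniform Lipschitz bounds for a countable point-separating family of continuous real-valued
functions on a compact metric space `K` imply equicontinuity of a family of curves
`γ : [T₁,T₂] → K`. -/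
theorem stmt3 (K : Type*) [MetricSpace K] [CompactSpace K] (T₁ T₂ : ℝ)
    (R : Set (Set.Icc T₁ T₂ → K)) (f : ℕ → K → ℝ) (hf : ∀ n, Continuous (f n))
    (hsep : ∀ x y : K, x ≠ y → ∃ n, f n x ≠ f n y) (M : ℕ → ℝ)
    (hLip : ∀ n, ∀ γ ∈ R, ∀ s t : Set.Icc T₁ T₂,
      |f n (γ s) - f n (γ t)| ≤ M n * |(s : ℝ) - (t : ℝ)|) :
    Equicontinuous (fun γ : R => (γ : Set.Icc T₁ T₂ → K)) := by
  intro t₀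
  rw [Metric.equicontinuousAt_iff]
  intro ε hε
  set D : Set (K × K) := {p | ε ≤ dist p.1 p.2} with hD_def
  have hDclosed : IsClosed D :=
    isClosed_le continuous_const (continuous_dist.comp (continuous_fst.prodMk continuous_snd))
  have hDcompact : IsCompact D := hDclosed.isCompact
  by_cases hDne : D.Nonempty
  · -- finite subcover
    set U : ℕ → Set (K × K) := fun n => {p | 0 < |f n p.1 - f n p.2|} with hU_def
    have hUopen : ∀ n, IsOpen (U n) := fun n =>
      isOpen_lt continuous_const
        (((hf n).comp continuous_fst).sub ((hf n).comp continuous_snd)).abs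
    have hcover : D ⊆ ⋃ n, U n := by
      rintro ⟨x, y⟩ hp
      have hxy : x ≠ y := by
        rintro rfl
        simp only [hD_def, mem_setOf_eq, dist_self] at hp
        linarith
      obtain ⟨n, hn⟩ := hsep x y hxy
      exact mem_iUnion.2 ⟨n, abs_pos.2 (sub_ne_zero.2 hn)⟩
    obtain ⟨F, hF⟩ := hDcompact.elim_finite_subcover U hUopen hcover
    set g : K × K → ℝ := fun p => ∑ n ∈ F, |f n p.1 - f n p.2| with hg_def
    have hgcont : Continuous g := by
      apply continuous_finset_sum
      intro n _
      exact (((hf n).comp continuous_fst).sub ((hf n).comp continuous_snd)).abs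
    obtain ⟨p₀, hp₀D, hp₀min⟩ := hDcompact.exists_isMinOn hDne hgcont.continuousOn
    set c : ℝ := g p₀ with hc_def
    have hcpos : 0 < c := by
      obtain ⟨n, hnF, hn⟩ := by
        have := hF hp₀D
        simpa only [mem_iUnion, exists_prop] using this
      have : |f n p₀.1 - f n p₀.2| ≤ c :=
        Finset.single_le_sum (f := fun m => |f m p₀.1 - f m p₀.2|) (fun i _ => abs_nonneg _) hnF
      exact lt_of_lt_of_le hn this
    set A : ℝ := ∑ n ∈ F, |M n| with hA_def
    have hA0 : 0 ≤ A := Finset.sum_nonneg fun n _ => abs_nonneg _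
    refine ⟨c / (A + 1), div_pos hcpos (by linarith), fun s hs γ => ?_⟩
    have hkey : g (γ.1 s, γ.1 t₀) < c := by
      have hbound : ∀ n ∈ F, |f n (γ.1 s) - f n (γ.1 t₀)| ≤ |M n| * (c / (A + 1)) := by
        intro n _
        have h1 := hLip n γ.1 γ.2 s t₀
        have h2 : |(s : ℝ) - (t₀ : ℝ)| = dist s t₀ := by
          rw [Subtype.dist_eq, Real.dist_eq]
        have h3 : M n * |(s : ℝ) - (t₀ : ℝ)| ≤ |M n| * (c / (A + 1)) := by
          rw [h2]
          calc M n * dist s t₀ ≤ |M n * dist s t₀| := le_abs_self _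
            _ = |M n| * dist s t₀ := by rw [abs_mul, abs_of_nonneg dist_nonneg]
            _ ≤ |M n| * (c / (A + 1)) :=
              mul_le_mul_of_nonneg_left hs.le (abs_nonneg _)
        linarith
      calc g (γ.1 s, γ.1 t₀) ≤ ∑ n ∈ F, |M n| * (c / (A + 1)) :=
            Finset.sum_le_sum hbound
        _ = A * (c / (A + 1)) := by rw [← Finset.sum_mul]
        _ < c := by
            rw [mul_div_assoc', div_lt_iff₀ (by linarith)]
            nlinarith
    have hnotD : (γ.1 s, γ.1 t₀) ∉ D := fun h => absurd (hp₀min h) (not_le.2 hkey)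
    have : dist (γ.1 s) (γ.1 t₀) < ε := not_le.1 hnotD
    simpa [dist_comm] using this
  · refine ⟨1, one_pos, fun s _ γ => ?_⟩
    by_contra h
    exact hDne ⟨(γ.1 t₀, γ.1 s), not_lt.1 h⟩
end

section
/- Let (f_n) be a sequence of continuous functions on an interval I ⊂ ℝ converging uniformly to f, let t₀ ∈ I, and c₀ ∈ ℝ. Suppose that for every ε > 0 there exist δ > 0 and M such that for all n ≥ M and all t ∈ (t₀, t₀+δ) ∩ I, f_n(t) − f_n(t₀) ≥ (c₀ − ε)(t − t₀). Then the lower right Dini derivative satisfies D₊f(t₀) ≥ c₀. -/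
open Filter Set

/-- If continuous functions `f_n` converge uniformly to `f` on `I`, `t₀ ∈ I`, and for every
`ε > 0` the estimate `f_n(t) − f_n(t₀) ≥ (c₀−ε)(t−t₀)` holds for all large `n` and all
`t ∈ (t₀,t₀+δ) ∩ I` for some `δ > 0`, then the lower right Dini derivative of `f` at `t₀`
(within `I`) is at least `c₀`. -/
theorem stmt7 (I : Set ℝ) (fseq : ℕ → ℝ → ℝ) (f : ℝ → ℝ)
    (hcont : ∀ n, ContinuousOn (fseq n) I)
    (hconv : TendstoUniformlyOn fseq f Filter.atTop I)
    (t₀ : ℝ) (ht₀ : t₀ ∈ I) (c₀ : ℝ)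
    (h : ∀ ε > (0 : ℝ), ∃ δ > (0 : ℝ), ∃ M : ℕ, ∀ n ≥ M, ∀ t ∈ Set.Ioo t₀ (t₀ + δ) ∩ I,
      (c₀ - ε) * (t - t₀) ≤ fseq n t - fseq n t₀) :
    ((c₀ : ℝ) : EReal) ≤
      Filter.liminf (fun t : ℝ => (((f t - f t₀) / (t - t₀) : ℝ) : EReal))
        (nhdsWithin t₀ (Set.Ioi t₀ ∩ I)) := by
  set L := Filter.liminf (fun t : ℝ => (((f t - f t₀) / (t - t₀) : ℝ) : EReal))
      (nhdsWithin t₀ (Set.Ioi t₀ ∩ I)) with hL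
  have key : ∀ ε > (0 : ℝ), ((c₀ - ε : ℝ) : EReal) ≤ L := by
    intro ε hε
    obtain ⟨δ, hδ, M, hM⟩ := h ε hε
    -- pass to the limit in n
    have hlim : ∀ t ∈ Set.Ioo t₀ (t₀ + δ) ∩ I, (c₀ - ε) * (t - t₀) ≤ f t - f t₀ := by
      intro t ht
      have h1 : Filter.Tendsto (fun n => fseq n t - fseq n t₀) Filter.atTop
          (nhds (f t - f t₀)) :=
        (hconv.tendsto_at ht.2).sub (hconv.tendsto_at ht₀)
      exact ge_of_tendsto h1 (Filter.eventually_atTop.2 ⟨M, fun n hn => hM n hn t ht⟩)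
    -- hence eventually the difference quotient is ≥ c₀ - ε
    have hev : ∀ᶠ t in nhdsWithin t₀ (Set.Ioi t₀ ∩ I),
        ((c₀ - ε : ℝ) : EReal) ≤ (((f t - f t₀) / (t - t₀) : ℝ) : EReal) := by
      have h1 : ∀ᶠ t in nhdsWithin t₀ (Set.Ioi t₀ ∩ I), t ∈ Set.Ioi t₀ ∩ I :=
        self_mem_nhdsWithin
      have h2 : ∀ᶠ t in nhdsWithin t₀ (Set.Ioi t₀ ∩ I), t < t₀ + δ :=
        nhdsWithin_le_nhds (Filter.Tendsto.eventually_lt_const (by linarith)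
          Filter.tendsto_id)
      filter_upwards [h1, h2] with t ht htδ
      have hpos : 0 < t - t₀ := sub_pos.2 ht.1
      have := hlim t ⟨⟨ht.1, htδ⟩, ht.2⟩
      have : (c₀ - ε : ℝ) ≤ (f t - f t₀) / (t - t₀) := (le_div_iff₀ hpos).2 this
      exact_mod_cast this
    exact Filter.le_liminf_of_le (by isBoundedDefault) hev
  by_contra hcon
  push_neg at hcon
  obtain ⟨x, hx1, hx2⟩ := (EReal.lt_iff_exists_real_btwn).1 hcon
  have hε : (0 : ℝ) < c₀ - x := by
    have := EReal.coe_lt_coe_iff.1 hx2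
    linarith
  have := key (c₀ - x) hε
  simp only [sub_sub_cancel] at this
  exact absurd (lt_of_le_of_lt this hx1) (lt_irrefl _)
end

section
/- Let X be a finite-dimensional real inner product space, Y ⊆ X a linear subspace with orthogonal projection π : X → Y, and fix w, w' ∈ X with w ≠ w', w ∈ Y. Define B = (√E/|w−w'|³)(|w−w'|²·Id_Y − (w − π(w'))⊗(w − π(w'))) as an endomorphism of Y, where E > 0 and (u⊗u)(v) = ⟨u,v⟩u. Then B is self-adjoint and positive semidefinite; B is positive definite if w' ∉ Y, and if w' ∈ Y then the kernel of B equals the span of w − w'. -/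
open scoped RealInnerProductSpace

/-!
For `w ∈ Y` the vector `p = w - π w'` is the projection of `w - w'` onto `Y`, so `‖p‖ ≤ ‖w - w'‖`
with equality exactly when `w' ∈ Y`. The operator `B` is a positive multiple of
`r • Id - p ⊗ p` with `r = ‖w - w'‖²`, whose quadratic form `r ‖v‖² - ⟪p, v⟫²` is nonnegative by
Cauchy–Schwarz and positive on `v ≠ 0` when `‖p‖² < r`; when `‖p‖² = r` its kernel is the line
through `p`.
-/

namespace Submodule

variable {𝕜 E : Type*} [RCLike 𝕜] [NormedAddCommGroup E] [InnerProductSpace 𝕜 E]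
  (K : Submodule 𝕜 E) [K.HasOrthogonalProjection] {w : E} (w' : E)

theorem starProjection_sub_of_mem (hw : w ∈ K) :
    K.starProjection (w - w') = w - K.starProjection w' := by
  rw [map_sub, K.starProjection_eq_self_iff.mpr hw]

theorem norm_sub_starProjection_le (hw : w ∈ K) :
    ‖w - K.starProjection w'‖ ≤ ‖w - w'‖ := by
  simpa only [K.starProjection_sub_of_mem w' hw] using K.norm_starProjection_apply_le (w - w')

theorem norm_sub_starProjection_eq_iff (hw : w ∈ K) :
    ‖w - K.starProjection w'‖ = ‖w - w'‖ ↔ w' ∈ K := by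
  rw [← K.starProjection_sub_of_mem w' hw, ← K.mem_iff_norm_starProjection,
    K.sub_mem_iff_right hw]

end Submodule

section ScaledIdSubRankOne

variable {X : Type*} [NormedAddCommGroup X] [InnerProductSpace ℝ X]

noncomputable def scaledIdSubRankOne (c r : ℝ) (p : X) : X →L[ℝ] X :=
  c • (r • ContinuousLinearMap.id ℝ X - (innerSL ℝ p).smulRight p)

variable {c r : ℝ} {p : X}

theorem scaledIdSubRankOne_apply (v : X) :
    scaledIdSubRankOne c r p v = c • (r • v - ⟪p, v⟫ • p) := by
  simp [scaledIdSubRankOne]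

theorem inner_scaledIdSubRankOne_left (u v : X) :
    ⟪scaledIdSubRankOne c r p u, v⟫ = c * (r * ⟪u, v⟫ - ⟪p, u⟫ * ⟪p, v⟫) := by
  simp only [scaledIdSubRankOne_apply, real_inner_smul_left, inner_sub_left]

theorem inner_scaledIdSubRankOne_comm (u v : X) :
    ⟪scaledIdSubRankOne c r p u, v⟫ = ⟪u, scaledIdSubRankOne c r p v⟫ := by
  rw [real_inner_comm (scaledIdSubRankOne c r p v) u, inner_scaledIdSubRankOne_left,
    inner_scaledIdSubRankOne_left, real_inner_comm u v]
  ring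

theorem scaledIdSubRankOne_mem {Y : Submodule ℝ X} (hp : p ∈ Y) {v : X} (hv : v ∈ Y) :
    scaledIdSubRankOne c r p v ∈ Y := by
  rw [scaledIdSubRankOne_apply]
  exact Y.smul_mem _ (Y.sub_mem (Y.smul_mem _ hv) (Y.smul_mem _ hp))

theorem sq_inner_le_of_norm_sq_le (hr : ‖p‖ ^ 2 ≤ r) (v : X) :
    ⟪p, v⟫ * ⟪p, v⟫ ≤ r * ⟪v, v⟫ := by
  have hcs := real_inner_mul_inner_self_le p v
  rw [real_inner_self_eq_norm_sq, real_inner_self_eq_norm_sq] at hcs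
  rw [real_inner_self_eq_norm_sq]
  nlinarith [mul_le_mul_of_nonneg_right hr (sq_nonneg ‖v‖)]

theorem inner_scaledIdSubRankOne_self_nonneg (hc : 0 ≤ c) (hr : ‖p‖ ^ 2 ≤ r) (v : X) :
    0 ≤ ⟪scaledIdSubRankOne c r p v, v⟫ := by
  rw [inner_scaledIdSubRankOne_left]
  exact mul_nonneg hc (sub_nonneg.mpr (sq_inner_le_of_norm_sq_le hr v))

theorem inner_scaledIdSubRankOne_self_pos (hc : 0 < c) (hr : ‖p‖ ^ 2 < r) {v : X}
    (hv : v ≠ 0) : 0 < ⟪scaledIdSubRankOne c r p v, v⟫ := by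
  rw [inner_scaledIdSubRankOne_left]
  refine mul_pos hc (sub_pos.mpr ?_)
  calc ⟪p, v⟫ * ⟪p, v⟫ ≤ ‖p‖ ^ 2 * ⟪v, v⟫ := sq_inner_le_of_norm_sq_le le_rfl v
    _ < r * ⟪v, v⟫ := mul_lt_mul_of_pos_right hr (real_inner_self_pos.mpr hv)

theorem scaledIdSubRankOne_eq_zero_iff (hc : c ≠ 0) (hp : p ≠ 0) (v : X) :
    scaledIdSubRankOne c (‖p‖ ^ 2) p v = 0 ↔ ∃ a : ℝ, v = a • p := by
  have hp2 : ‖p‖ ^ 2 ≠ 0 := by positivity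
  rw [scaledIdSubRankOne_apply, smul_eq_zero_iff_right hc, sub_eq_zero]
  constructor
  · intro h
    exact ⟨(‖p‖ ^ 2)⁻¹ * ⟪p, v⟫, by rw [mul_smul, ← h, inv_smul_smul₀ hp2]⟩
  · rintro ⟨a, rfl⟩
    rw [real_inner_smul_right, real_inner_self_eq_norm_sq, smul_smul, mul_comm a]

end ScaledIdSubRankOne

/-- The graph operator `B = (√E/|w−w'|³)(|w−w'|²·Id − (w − π(w'))⊗(w − π(w')))` of the elementary
Lagrangian relation, as an endomorphism of the collision plane `Y` (with `π` the orthogonal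
projection onto `Y`, `w ∈ Y`, `w ≠ w'`, `E > 0`): it preserves `Y`, is self-adjoint and positive
semidefinite on `Y`; it is positive definite on `Y` if `w' ∉ Y`, and if `w' ∈ Y` its kernel in
`Y` is the span of `w − w'`. -/
theorem stmt16 (X : Type*) [NormedAddCommGroup X] [InnerProductSpace ℝ X]
    [FiniteDimensional ℝ X] (Y : Submodule ℝ X) (w w' : X) (hww' : w ≠ w') (hw : w ∈ Y)
    (E : ℝ) (hE : 0 < E) :
    let p : X := w - ((Y.orthogonalProjectionOnto w' : Y) : X)
    let B : X →L[ℝ] X := (Real.sqrt E / ‖w - w'‖ ^ 3) •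
      (‖w - w'‖ ^ 2 • ContinuousLinearMap.id ℝ X - (innerSL ℝ p).smulRight p)
    (∀ v ∈ Y, B v ∈ Y) ∧
      (∀ u v : X, ⟪B u, v⟫ = ⟪u, B v⟫) ∧
      (∀ v ∈ Y, 0 ≤ ⟪B v, v⟫) ∧
      (w' ∉ Y → ∀ v ∈ Y, v ≠ 0 → 0 < ⟪B v, v⟫) ∧
      (w' ∈ Y → ∀ v ∈ Y, (B v = 0 ↔ ∃ c : ℝ, v = c • (w - w'))) := by
  intro p B
  have hB : B = scaledIdSubRankOne (Real.sqrt E / ‖w - w'‖ ^ 3) (‖w - w'‖ ^ 2) p := rfl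
  have hp : p = w - Y.starProjection w' := rfl
  have hc : 0 < Real.sqrt E / ‖w - w'‖ ^ 3 := by
    have := norm_pos_iff.mpr (sub_ne_zero_of_ne hww')
    positivity
  have hle : ‖p‖ ^ 2 ≤ ‖w - w'‖ ^ 2 := by
    gcongr
    exact Y.norm_sub_starProjection_le w' hw
  rw [hB]
  refine ⟨fun v ↦ scaledIdSubRankOne_mem (Y.sub_mem hw (Y.starProjection_apply_mem w')),
    inner_scaledIdSubRankOne_comm, fun v _ ↦ inner_scaledIdSubRankOne_self_nonneg hc.le hle v,
    fun hw' v _ hv ↦ ?_, fun hw' v _ ↦ ?_⟩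
  · refine inner_scaledIdSubRankOne_self_pos hc (lt_of_le_of_ne hle ?_) hv
    rw [Ne, sq_eq_sq₀ (norm_nonneg _) (norm_nonneg _)]
    exact (Y.norm_sub_starProjection_eq_iff w' hw).not.mpr hw'
  · rw [hp, Y.starProjection_eq_self_iff.mpr hw']
    exact scaledIdSubRankOne_eq_zero_iff hc.ne' (sub_ne_zero_of_ne hww') v
end
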